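/- arXiv:2604.16288 — 5 statements merged into one kernel-verified Lean document; each statement's English description precedes it below -/
import Mathlib

section
/- Let n ≥ 0 be an integer, c ∈ [0,1), and define q_{c,n}(θ) = (1−c²)/(1+c²−2c cos(2π(n+1)θ)) for θ ∈ 𝕋. Then q_{c,n} is a probability density on 𝕋, its entropy equals ∫_𝕋 q_{c,n} log q_{c,n} dθ = −log(1−c²), and (n+1) Σ_{k=1}^∞ (1/k) |q̂_{c,n}(k)|² = −log(1−c²); in particular, equality holds for q_{c,n} in the inequality ∫_𝕋 q log q dθ ≥ (n+1) Σ_{k=1}^∞ (1/k) |q̂(k)|². -/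
/-!
Summing the two geometric series gives the absolutely convergent expansion
`q_{c,n}(θ) = ∑_{k ∈ ℤ} c^|k| e^{2πik(n+1)θ}`, so `q̂(j) = c^{|j|/(n+1)}` when `(n+1) ∣ j` and
`q̂(j) = 0` otherwise. Hence `∫ q = q̂(0) = 1` and
`(n+1) ∑_k |q̂(k)|²/k = ∑_m c^{2m}/m = -log(1-c²)`.
For the entropy, `log q = log(1-c²) - 2 Re log(1 - c e^{2πi(n+1)θ})`; integrating the Taylor series
of this logarithm term by term against `q` only sees the coefficients `q̂(-m(n+1)) = c^m`, so
`∫ q log(1 - c e^{2πi(n+1)θ}) = -∑_m c^{2m}/m = log(1-c²)`.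
-/

open MeasureTheory Real Complex
open scoped Real

noncomputable section

/-- The normalized Haar (Lebesgue) probability measure on the circle `𝕋 = ℝ/ℤ`. -/
def circleMeasure : Measure UnitAddCircle := AddCircle.haarAddCircle

/-- The wrapped Poisson-kernel density
`q_{c,n}(θ) = (1−c²)/(1+c²−2c cos(2π(n+1)θ))`, where `cos(2π(n+1)θ)` is realized as
the real part of `e^{2πi(n+1)θ}` on the circle. -/
def qcn (n : ℕ) (c : ℝ) (θ : UnitAddCircle) : ℝ :=
  (1 - c ^ 2) / (1 + c ^ 2 - 2 * c * (fourier ((n : ℤ) + 1) θ).re)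

section FourierSeries

variable {T : ℝ}

lemma fourier_mul_apply_eq_zpow (k N : ℤ) (x : AddCircle T) :
    fourier (k * N) x = fourier N x ^ k := by
  rw [fourier_apply, fourier_apply, mul_zsmul, AddCircle.toCircle_zsmul, Circle.coe_zpow]

lemma norm_fourier_apply (k : ℤ) (x : AddCircle T) : ‖fourier k x‖ = 1 :=
  Circle.norm_coe _

variable [Fact (0 < T)]

theorem hasSum_integral_mul_of_hasSum_fourier {ι : Type*} [Countable ι] {f g : AddCircle T → ℂ}
    (hf : Integrable f AddCircle.haarAddCircle) {b : ι → ℂ} {φ : ι → ℤ}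
    (hb : Summable (‖b ·‖)) (hg : ∀ x, HasSum (fun i => b i * fourier (φ i) x) (g x)) :
    HasSum (fun i => b i * fourierCoeff f (-φ i)) (∫ x, f x * g x ∂AddCircle.haarAddCircle) := by
  have hterm : ∀ i, ∫ x, f x * (b i * fourier (φ i) x) ∂AddCircle.haarAddCircle =
      b i * fourierCoeff f (-φ i) := fun i => by
    simp only [fourierCoeff, neg_neg, smul_eq_mul, ← integral_const_mul]
    congr 1 with x
    ring
  have hnorm : ∀ i, ∫ x, ‖f x * (b i * fourier (φ i) x)‖ ∂AddCircle.haarAddCircle =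
      ‖b i‖ * ∫ x, ‖f x‖ ∂AddCircle.haarAddCircle := fun i => by
    simp only [norm_mul, norm_fourier_apply, mul_one, ← integral_const_mul, mul_comm]
  have hsum := hasSum_integral_of_summable_integral_norm
    (F := fun i x => f x * (b i * fourier (φ i) x))
    (fun i => by simpa only [smul_eq_mul, mul_comm, mul_left_comm] using
      ((hf.fourier_smul (φ i)).const_mul (b i)))
    (by simpa only [hnorm] using hb.mul_right _)
  simpa only [hterm, fun x => ((hg x).mul_left (f x)).tsum_eq] using hsum

theorem hasSum_fourierCoeff_of_hasSum_fourier {ι : Type*} [Countable ι] {g : AddCircle T → ℂ}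
    {b : ι → ℂ} {φ : ι → ℤ} (hb : Summable (‖b ·‖))
    (hg : ∀ x, HasSum (fun i => b i * fourier (φ i) x) (g x)) (j : ℤ) :
    HasSum (fun i => if φ i = j then b i else 0) (fourierCoeff g j) := by
  have hf : Integrable (fourier (T := T) (-j)) AddCircle.haarAddCircle :=
    (fourier (-j)).continuous.integrable_of_hasCompactSupport (.of_compactSpace _)
  have h := hasSum_integral_mul_of_hasSum_fourier hf hb hg
  simp only [fourierCoeff_fourier, Pi.single_apply, neg_inj, mul_ite, mul_one, mul_zero] at h
  simpa only [fourierCoeff, smul_eq_mul] using h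

end FourierSeries

section PoissonKernel

open ComplexConjugate

variable {c : ℝ} {z : ℂ}

lemma normSq_one_sub_ofReal_mul (c : ℝ) (hz : ‖z‖ = 1) :
    normSq (1 - c * z) = 1 + c ^ 2 - 2 * c * z.re := by
  have hre_im : z.re * z.re + z.im * z.im = 1 := by
    rw [← normSq_apply, ← Complex.sq_norm, hz, one_pow]
  simp only [normSq_apply, sub_re, sub_im, mul_re, mul_im, ofReal_re, ofReal_im, one_re, one_im]
  linear_combination c ^ 2 * hre_im

lemma norm_ofReal_mul_lt_one (hc : |c| < 1) (hz : ‖z‖ = 1) : ‖(c : ℂ) * z‖ < 1 := by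
  rwa [norm_mul, hz, mul_one, norm_real, Real.norm_eq_abs]

lemma one_sub_ofReal_mul_ne_zero (hc : |c| < 1) (hz : ‖z‖ = 1) : 1 - (c : ℂ) * z ≠ 0 := by
  intro h
  have := norm_ofReal_mul_lt_one hc hz
  rw [← sub_eq_zero.mp h, norm_one] at this
  exact this.false

theorem hasSum_poissonKernel (hc : |c| < 1) (hz : ‖z‖ = 1) :
    HasSum (fun k : ℤ => (c : ℂ) ^ k.natAbs * z ^ k) ((1 - c ^ 2) / normSq (1 - c * z) : ℝ) := by
  have hconj : z * conj z = 1 := by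
    rw [mul_conj, ← Complex.sq_norm, hz]; norm_num
  have hzinv : z⁻¹ = conj z := inv_eq_of_mul_eq_one_right hconj
  have hz' : ‖conj z‖ = 1 := by rw [RCLike.norm_conj, hz]
  have hw := one_sub_ofReal_mul_ne_zero hc hz
  have hw' := one_sub_ofReal_mul_ne_zero hc hz'
  have hnonneg : HasSum (fun m : ℕ => ((c : ℂ) * z) ^ m) (1 - c * z)⁻¹ :=
    hasSum_geometric_of_norm_lt_one (norm_ofReal_mul_lt_one hc hz)
  have hneg : HasSum (fun m : ℕ => ((c : ℂ) * conj z) ^ (m + 1))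
      (c * conj z * (1 - c * conj z)⁻¹) := by
    simpa only [pow_succ'] using (hasSum_geometric_of_norm_lt_one
      (norm_ofReal_mul_lt_one hc hz')).mul_left ((c : ℂ) * conj z)
  have hsum := HasSum.of_nat_of_neg_add_one (f := fun k : ℤ => (c : ℂ) ^ k.natAbs * z ^ k)
    (by simpa only [Int.natAbs_natCast, zpow_natCast, mul_pow] using hnonneg)
    (by
      convert hneg using 2 with m
      rw [show (-((m : ℤ) + 1)).natAbs = m + 1 by omega, zpow_neg, ← hzinv, ← Nat.cast_succ,
        zpow_natCast, ← inv_pow, mul_pow])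
  convert hsum using 1
  rw [ofReal_div, ← mul_conj, map_sub, map_one, map_mul, conj_ofReal]
  push_cast
  field_simp
  linear_combination (c : ℂ) ^ 2 * hconj

end PoissonKernel

instance : IsProbabilityMeasure circleMeasure :=
  inferInstanceAs (IsProbabilityMeasure AddCircle.haarAddCircle)

section Qcn

variable {n : ℕ} {c : ℝ}

lemma qcn_eq_div_normSq (n : ℕ) (c : ℝ) (θ : UnitAddCircle) :
    qcn n c θ = (1 - c ^ 2) / normSq (1 - c * fourier ((n : ℤ) + 1) θ) := by
  rw [qcn, normSq_one_sub_ofReal_mul c (norm_fourier_apply _ θ)]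

lemma qcn_pos (hc : |c| < 1) (θ : UnitAddCircle) : 0 < qcn n c θ := by
  rw [qcn_eq_div_normSq]
  have hc2 : c ^ 2 < 1 := by rwa [sq_lt_one_iff_abs_lt_one]
  exact div_pos (by linarith)
    (normSq_pos.mpr (one_sub_ofReal_mul_ne_zero hc (norm_fourier_apply _ θ)))

lemma continuous_qcn (hc : |c| < 1) : Continuous (qcn n c) := by
  simp_rw [funext (qcn_eq_div_normSq n c)]
  exact continuous_const.div (continuous_normSq.comp (by fun_prop))
    fun θ => (normSq_pos.mpr (one_sub_ofReal_mul_ne_zero hc (norm_fourier_apply _ θ))).ne'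

lemma hasSum_qcn (hc : |c| < 1) (θ : UnitAddCircle) :
    HasSum (fun k : ℤ => (c : ℂ) ^ k.natAbs * fourier (k * ((n : ℤ) + 1)) θ) (qcn n c θ) := by
  simpa only [fourier_mul_apply_eq_zpow, ← qcn_eq_div_normSq] using
    hasSum_poissonKernel hc (norm_fourier_apply ((n : ℤ) + 1) θ)

lemma summable_norm_pow_natAbs (hc : |c| < 1) : Summable fun k : ℤ => ‖(c : ℂ) ^ k.natAbs‖ := by
  simp only [norm_pow, norm_real, Real.norm_eq_abs]
  have h := summable_geometric_of_lt_one (abs_nonneg c) hc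
  refine .of_nat_of_neg_add_one (by simpa using h) ?_
  simpa only [show ∀ m : ℕ, (-((m : ℤ) + 1)).natAbs = m + 1 by omega] using
    (summable_nat_add_iff 1).mpr h

lemma fourierCoeff_qcn_mul (hc : |c| < 1) (m : ℤ) :
    fourierCoeff (fun θ => (qcn n c θ : ℂ)) (m * ((n : ℤ) + 1)) = (c : ℂ) ^ m.natAbs := by
  have h := hasSum_fourierCoeff_of_hasSum_fourier (summable_norm_pow_natAbs hc)
    (hasSum_qcn (n := n) hc) (m * ((n : ℤ) + 1))
  have hN : ((n : ℤ) + 1) ≠ 0 := by omega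
  simp only [mul_left_inj' hN] at h
  simpa using h.tsum_eq.symm

lemma fourierCoeff_qcn_of_not_dvd (hc : |c| < 1) {j : ℤ} (hj : ¬ ((n : ℤ) + 1) ∣ j) :
    fourierCoeff (fun θ => (qcn n c θ : ℂ)) j = 0 := by
  have h := hasSum_fourierCoeff_of_hasSum_fourier (summable_norm_pow_natAbs hc)
    (hasSum_qcn (n := n) hc) j
  simp only [show ∀ k : ℤ, k * ((n : ℤ) + 1) ≠ j from fun k hk => hj ⟨k, by rw [← hk, mul_comm]⟩,
    if_false] at h
  exact h.unique hasSum_zero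

lemma integral_qcn (hc : |c| < 1) : ∫ θ, qcn n c θ ∂circleMeasure = 1 := by
  have h := fourierCoeff_qcn_mul (n := n) hc 0
  simp only [zero_mul, fourierCoeff, neg_zero, fourier_zero, one_smul, integral_complex_ofReal,
    Int.natAbs_zero, pow_zero] at h
  exact_mod_cast h

lemma integral_qcn_mul_log (hc : |c| < 1) :
    ∫ θ, (qcn n c θ : ℂ) * log (1 - c * fourier ((n : ℤ) + 1) θ) ∂circleMeasure =
      (Real.log (1 - c ^ 2) : ℂ) := by
  have hseries : ∀ θ : UnitAddCircle, HasSum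
      (fun m : ℕ => -((c : ℂ) ^ m / m) * fourier ((m : ℤ) * ((n : ℤ) + 1)) θ)
      (log (1 - c * fourier ((n : ℤ) + 1) θ)) := fun θ => by
    simpa only [fourier_mul_apply_eq_zpow, zpow_natCast, mul_pow, neg_mul, div_mul_eq_mul_div,
      neg_neg] using (hasSum_taylorSeries_neg_log
        (norm_ofReal_mul_lt_one hc (norm_fourier_apply ((n : ℤ) + 1) θ))).neg
  have hsummable : Summable fun m : ℕ => ‖-((c : ℂ) ^ m / m)‖ := by
    refine (summable_geometric_of_lt_one (abs_nonneg c) hc).of_nonneg_of_le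
      (fun _ => norm_nonneg _) fun m => ?_
    rw [norm_neg, norm_div, norm_pow, norm_real, Real.norm_eq_abs, Complex.norm_natCast,
      div_eq_mul_inv]
    exact mul_le_of_le_one_right (by positivity) (Nat.cast_inv_le_one m)
  have hq : Integrable (fun θ => (qcn n c θ : ℂ)) AddCircle.haarAddCircle :=
    (continuous_ofReal.comp (continuous_qcn hc)).integrable_of_hasCompactSupport
      (.of_compactSpace _)
  have h := hasSum_integral_mul_of_hasSum_fourier hq hsummable hseries
  simp only [← neg_mul, fourierCoeff_qcn_mul hc, Int.natAbs_neg, Int.natAbs_natCast] at h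
  have hc2 : ‖((c : ℂ) ^ 2)‖ < 1 := by
    rwa [norm_pow, norm_real, Real.norm_eq_abs, sq_lt_one_iff_abs_lt_one, abs_abs]
  have hlog := (hasSum_taylorSeries_neg_log hc2).neg
  rw [neg_neg, ← ofReal_pow, ← ofReal_one, ← ofReal_sub,
    ← ofReal_log (by nlinarith [sq_abs c, abs_nonneg c])] at hlog
  have hterms : (fun m : ℕ => -((c : ℂ) ^ m / m) * c ^ m) =
      fun m : ℕ => -(((c ^ 2 : ℝ) : ℂ) ^ m / m) := by
    funext m
    push_cast
    ring
  rw [hterms] at h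
  exact h.unique hlog

lemma log_qcn (hc : |c| < 1) (θ : UnitAddCircle) :
    Real.log (qcn n c θ) =
      Real.log (1 - c ^ 2) - 2 * (log (1 - c * fourier ((n : ℤ) + 1) θ)).re := by
  have hw := one_sub_ofReal_mul_ne_zero hc (norm_fourier_apply ((n : ℤ) + 1) θ)
  have hc2 : c ^ 2 < 1 := by rwa [sq_lt_one_iff_abs_lt_one]
  rw [qcn_eq_div_normSq, Real.log_div (by linarith) (normSq_pos.mpr hw).ne', ← Complex.sq_norm,
    Real.log_pow, log_re]
  push_cast
  ring

theorem integral_qcn_mul_log_qcn (hc : |c| < 1) :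
    ∫ θ, qcn n c θ * Real.log (qcn n c θ) ∂circleMeasure = -Real.log (1 - c ^ 2) := by
  set w : UnitAddCircle → ℂ := fun θ => 1 - c * fourier ((n : ℤ) + 1) θ
  have hw_slit : ∀ θ, w θ ∈ slitPlane := fun θ => by
    simpa only [w, sub_eq_add_neg] using mem_slitPlane_of_norm_lt_one
      (by rw [norm_neg]; exact norm_ofReal_mul_lt_one hc (norm_fourier_apply _ θ))
  have hq : Integrable (qcn n c) circleMeasure :=
    (continuous_qcn hc).integrable_of_hasCompactSupport (.of_compactSpace _)
  have hF : Integrable (fun θ => (qcn n c θ : ℂ) * log (w θ)) circleMeasure :=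
    ((continuous_ofReal.comp (continuous_qcn hc)).mul
      ((by fun_prop : Continuous w).clog hw_slit)).integrable_of_hasCompactSupport
      (.of_compactSpace _)
  calc ∫ θ, qcn n c θ * Real.log (qcn n c θ) ∂circleMeasure
      = ∫ θ, qcn n c θ * Real.log (1 - c ^ 2) - 2 * ((qcn n c θ : ℂ) * log (w θ)).re
          ∂circleMeasure := by
        congr 1 with θ
        rw [log_qcn hc, re_ofReal_mul]
        ring
    _ = Real.log (1 - c ^ 2) * ∫ θ, qcn n c θ ∂circleMeasure
          - 2 * (∫ θ, (qcn n c θ : ℂ) * log (w θ) ∂circleMeasure).re := by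
        have hF_re : Integrable (fun θ => 2 * ((qcn n c θ : ℂ) * log (w θ)).re) circleMeasure :=
          hF.re.const_mul 2
        rw [integral_sub (hq.mul_const _) hF_re, integral_mul_const, integral_const_mul,
          mul_comm]
        exact congrArg (_ - 2 * ·) (integral_re hF)
    _ = -Real.log (1 - c ^ 2) := by
        rw [integral_qcn hc, integral_qcn_mul_log hc, ofReal_re]
        ring

theorem hasSum_inv_mul_norm_fourierCoeff_qcn_sq (hc : |c| < 1) :
    HasSum (fun k : ℕ => (1 / ((k : ℝ) + 1)) *
        ‖fourierCoeff (fun θ => (qcn n c θ : ℂ)) ((k : ℤ) + 1)‖ ^ 2)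
      (-Real.log (1 - c ^ 2) / ((n : ℝ) + 1)) := by
  have hinj : Function.Injective fun m : ℕ => (n + 1) * m + n := fun a b hab => by
    simpa using hab
  refine (hinj.hasSum_iff fun k hk => ?_).mp ?_
  · have hndvd : ¬ ((n : ℤ) + 1) ∣ (k : ℤ) + 1 := by
      rintro ⟨d, hd⟩
      have hd0 : 0 < d := by nlinarith
      lift d to ℕ using hd0.le
      obtain ⟨m, rfl⟩ := Nat.exists_eq_succ_of_ne_zero (by omega : d ≠ 0)
      exact hk ⟨m, by zify; push_cast at hd; linarith⟩
    simp [fourierCoeff_qcn_of_not_dvd hc hndvd]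
  · have hc2 : |c ^ 2| < 1 := by rwa [abs_pow, sq_lt_one_iff_abs_lt_one, abs_abs]
    have hterm : ∀ m : ℕ, 1 / ((((n + 1) * m + n : ℕ) : ℝ) + 1) *
        ‖fourierCoeff (fun θ => (qcn n c θ : ℂ)) ((((n + 1) * m + n : ℕ) : ℤ) + 1)‖ ^ 2 =
        (c ^ 2) ^ (m + 1) / (m + 1) / ((n : ℝ) + 1) := fun m => by
      have hindex : (((n + 1) * m + n : ℕ) : ℤ) + 1 = ((m + 1 : ℕ) : ℤ) * ((n : ℤ) + 1) := by
        push_cast; ring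
      rw [hindex, fourierCoeff_qcn_mul hc, Int.natAbs_natCast, norm_pow, norm_real,
        Real.norm_eq_abs, ← pow_mul, mul_comm (m + 1), pow_mul, sq_abs]
      push_cast
      field_simp
      ring
    simpa only [Function.comp_def, hterm] using
      (Real.hasSum_pow_div_log_of_abs_lt_one hc2).div_const ((n : ℝ) + 1)

end Qcn

/-- `q_{c,n}` is a probability density, its entropy equals `−log(1−c²)`, and
`(n+1) Σ_{k≥1} (1/k)|q̂_{c,n}(k)|² = −log(1−c²)`; in particular, equality holds for
`q_{c,n}` in the entropy–`Ḣ^{-1/2}` inequality. -/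
theorem qcn_extremizer (n : ℕ) (c : ℝ) (hc0 : 0 ≤ c) (hc1 : c < 1) :
    (∀ θ, 0 ≤ qcn n c θ) ∧
    (∫ θ, qcn n c θ ∂circleMeasure = 1) ∧
    (∫ θ, qcn n c θ * Real.log (qcn n c θ) ∂circleMeasure = -Real.log (1 - c ^ 2)) ∧
    Summable (fun k : ℕ =>
      (1 / ((k : ℝ) + 1)) * ‖fourierCoeff (fun θ => (qcn n c θ : ℂ)) ((k : ℤ) + 1)‖ ^ 2) ∧
    ((n : ℝ) + 1) *
      ∑' k : ℕ, (1 / ((k : ℝ) + 1)) *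
        ‖fourierCoeff (fun θ => (qcn n c θ : ℂ)) ((k : ℤ) + 1)‖ ^ 2
      = -Real.log (1 - c ^ 2) := by
  have hc : |c| < 1 := abs_lt.mpr ⟨by linarith, hc1⟩
  have hsum := hasSum_inv_mul_norm_fourierCoeff_qcn_sq (n := n) hc
  refine ⟨fun θ => (qcn_pos hc θ).le, integral_qcn hc, integral_qcn_mul_log_qcn hc,
    hsum.summable, ?_⟩
  rw [hsum.tsum_eq, mul_div_cancel₀ _ (by positivity)]
end
end

section
/- Let n ≥ 0 be an integer and let W : 𝕋 → ℝ be a continuous even function with Ŵ(0) = 0 which is 1/(n+1)-periodic (W(θ + 1/(n+1)) = W(θ) for all θ), normalized so that 2Ŵ(n+1) = 1, and satisfying the decay condition 2Ŵ(k) ≤ (n+1)/k for every integer k ≥ 1. Then for every K > 1 there exists a continuous probability density q on 𝕋 with F_K(q) < 0 = F_K(q_u); in particular, the uniform density is not a global minimizer of the free energy in the supercritical regime K > 1. -/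
open MeasureTheory Real Complex
open scoped Real

noncomputable section

/-- The mean-field free energy
`F_K(q) = ∫ q log q − K ∫∫ W(θ−θ') q(θ) q(θ')`. -/
def freeEnergy (W : UnitAddCircle → ℝ) (K : ℝ) (q : UnitAddCircle → ℝ) : ℝ :=
  (∫ θ, q θ * Real.log (q θ) ∂circleMeasure) -
    K * ∫ θ, (∫ θ', W (θ - θ') * q θ * q θ' ∂circleMeasure) ∂circleMeasure

/-!
Perturb the uniform density along the mode `n + 1`: `q = 1 + ε cos (2π (n + 1) θ)`.
Convolution with `W` multiplies `e_k` by `Ŵ(k)`, so the interaction energy of `q` is exactly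
`ε² Re Ŵ(n + 1) / 2 = ε² / 4`, whereas `(1 + x) log (1 + x) ≤ x + x² / 2 + 4 |x|³` bounds the
entropy by `ε² / 4 + 4 ε³`. Hence `F_K(q) ≤ (1 - K) ε² / 4 + 4 ε³ < 0` once `ε` is small.
-/

theorem Real.one_add_mul_log_one_add_le {x : ℝ} (hx : |x| ≤ 1 / 2) :
    (1 + x) * Real.log (1 + x) ≤ x + x ^ 2 / 2 + 4 * |x| ^ 3 := by
  have htaylor := Real.abs_log_sub_add_sum_range_le (x := -x) (by rw [abs_neg]; linarith) 2
  simp only [Finset.sum_range_succ, Finset.sum_range_zero, abs_neg, sub_neg_eq_add] at htaylor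
  have hlog : Real.log (1 + x) ≤ x - x ^ 2 / 2 + 2 * |x| ^ 3 := by
    have h3 : |x| ^ 3 / (1 - |x|) ≤ 2 * |x| ^ 3 := by
      rw [div_le_iff₀ (by linarith)]
      nlinarith [pow_nonneg (abs_nonneg x) 3]
    have := (abs_le.mp (htaylor.trans h3)).2
    norm_num at this
    linarith
  have hx1 : 0 ≤ 1 + x := by linarith [neg_abs_le x]
  calc (1 + x) * Real.log (1 + x) ≤ (1 + x) * (x - x ^ 2 / 2 + 2 * |x| ^ 3) :=
        mul_le_mul_of_nonneg_left hlog hx1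
    _ = x + x ^ 2 / 2 - x ^ 3 / 2 + 2 * |x| ^ 3 + 2 * x * |x| ^ 3 := by ring
    _ ≤ x + x ^ 2 / 2 + 4 * |x| ^ 3 := by
        have hx3 : -x ^ 3 ≤ |x| ^ 3 := by rw [← abs_pow]; exact neg_le_abs _
        nlinarith [le_abs_self x, pow_nonneg (abs_nonneg x) 3]

namespace AddCircle

variable {T : ℝ}

theorem abs_re_fourier_le_one (n : ℤ) (x : AddCircle T) : |(fourier n x).re| ≤ 1 :=
  (abs_re_le_norm _).trans (Circle.norm_coe _).le

theorem re_mul_re_mul_fourier (w : ℂ) (n : ℤ) (x : AddCircle T) :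
    (fourier n x).re * (w * fourier n x).re = ((w * fourier (n + n) x).re + w.re) / 2 := by
  have hnorm : (fourier n x).re ^ 2 + (fourier n x).im ^ 2 = 1 := by
    have := Circle.normSq_coe (toCircle (n • x))
    rw [normSq_apply] at this
    rw [fourier_apply]; linear_combination this
  rw [fourier_add]
  simp only [mul_re, mul_im]
  linear_combination (w.re / 2) * hnorm

theorem fourier_apply_sub (n : ℤ) (x y : AddCircle T) :
    fourier n (x - y) = fourier n x * fourier (-n) y := by
  simp [fourier_apply, sub_eq_add_neg, toCircle_add]

theorem abs_mul_re_fourier_le (ε : ℝ) (n : ℤ) (x : AddCircle T) :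
    |ε * (fourier n x).re| ≤ |ε| := by
  rw [abs_mul]
  exact mul_le_of_le_one_right (abs_nonneg ε) (abs_re_fourier_le_one n x)

variable [Fact (0 < T)]

theorem integral_fourier_of_ne_zero {n : ℤ} (hn : n ≠ 0) :
    ∫ x, fourier n x ∂(haarAddCircle (T := T)) = (0 : ℂ) := by
  simpa [fourierCoeff, fourier_zero, Pi.single_apply, hn.symm] using
    congr_fun (fourierCoeff_fourier (T := T) n) 0

theorem integrable_of_continuous {E : Type*} [NormedAddCommGroup E] {f : AddCircle T → E}
    (hf : Continuous f) : Integrable f haarAddCircle :=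
  hf.integrable_of_hasCompactSupport (.of_compactSpace f)

theorem integral_re_mul_fourier (w : ℂ) {n : ℤ} (hn : n ≠ 0) :
    ∫ x, (w * fourier n x).re ∂(haarAddCircle (T := T)) = 0 := by
  have hint := (integrable_of_continuous (T := T) (fourier n).continuous).const_mul w
  have := integral_re hint
  rw [integral_const_mul, integral_fourier_of_ne_zero hn, mul_zero] at this
  simpa using this

theorem integral_re_fourier_mul_re_mul_fourier (w : ℂ) {n : ℤ} (hn : n ≠ 0) :
    ∫ x, (fourier n x).re * (w * fourier n x).re ∂(haarAddCircle (T := T)) = w.re / 2 := by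
  simp_rw [re_mul_re_mul_fourier]
  rw [integral_div, integral_add ?_ (integrable_const _), integral_re_mul_fourier w (by omega)]
  · simp
  · exact integrable_of_continuous (by fun_prop)

theorem integral_comp_sub_mul_fourier (f : AddCircle T → ℂ) (n : ℤ) (x : AddCircle T) :
    ∫ y, f (x - y) * fourier n y ∂(haarAddCircle (T := T)) = fourierCoeff f n * fourier n x := by
  rw [← integral_sub_left_eq_self _ _ x, fourierCoeff, ← integral_mul_const]
  simp only [sub_sub_cancel, fourier_apply_sub, smul_eq_mul]
  congr 1; ext y; ring

theorem integral_comp_sub_mul_re_fourier {W : AddCircle T → ℝ} (hW : Integrable W haarAddCircle)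
    (n : ℤ) (x : AddCircle T) :
    ∫ y, W (x - y) * (fourier n y).re ∂(haarAddCircle (T := T)) =
      (fourierCoeff (fun y ↦ (W y : ℂ)) n * fourier n x).re := by
  have hint : Integrable (fun y ↦ (W (x - y) : ℂ) * fourier n y) haarAddCircle :=
    ((hW.ofReal (𝕜 := ℂ)).comp_sub_left x).mul_bdd (fourier n).continuous.aestronglyMeasurable
      (.of_forall fun y ↦ (Circle.norm_coe _).le)
  have := integral_re hint
  simp only [RCLike.re_to_complex, re_ofReal_mul] at this
  rw [this, integral_comp_sub_mul_fourier (fun y ↦ (W y : ℂ))]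

theorem integral_one_add_mul_re_fourier {n : ℤ} (hn : n ≠ 0) (ε : ℝ) :
    ∫ x, (1 + ε * (fourier n x).re) ∂(haarAddCircle (T := T)) = 1 := by
  have hc := integral_re_mul_fourier (T := T) 1 hn
  simp only [one_mul] at hc
  rw [integral_add (integrable_const 1) (integrable_of_continuous (by fun_prop)),
    integral_const_mul, hc]
  simp

theorem integral_interaction_one_add_mul_re_fourier {W : AddCircle T → ℝ}
    (hW : Integrable W haarAddCircle) (hW0 : ∫ x, W x ∂haarAddCircle = 0) {n : ℤ} (hn : n ≠ 0)
    (ε : ℝ) :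
    ∫ x, ∫ y, W (x - y) * (1 + ε * (fourier n x).re) * (1 + ε * (fourier n y).re)
        ∂haarAddCircle ∂(haarAddCircle (T := T)) =
      ε ^ 2 / 2 * (fourierCoeff (fun y ↦ (W y : ℂ)) n).re := by
  set w := fourierCoeff (fun y ↦ (W y : ℂ)) n
  have hinner : ∀ x, ∫ y, W (x - y) * (1 + ε * (fourier n x).re) * (1 + ε * (fourier n y).re)
      ∂haarAddCircle =
        ε * (w * fourier n x).re + ε ^ 2 * ((fourier n x).re * (w * fourier n x).re) := by
    intro x
    have hWx : Integrable (fun y ↦ W (x - y)) haarAddCircle := hW.comp_sub_left x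
    have hWc : Integrable (fun y ↦ W (x - y) * (fourier n y).re) haarAddCircle :=
      hWx.mul_bdd (by fun_prop) (.of_forall fun y ↦ abs_re_fourier_le_one n y)
    calc ∫ y, W (x - y) * (1 + ε * (fourier n x).re) * (1 + ε * (fourier n y).re) ∂haarAddCircle
        = (1 + ε * (fourier n x).re) * ((∫ y, W (x - y) ∂haarAddCircle) +
            ε * ∫ y, W (x - y) * (fourier n y).re ∂haarAddCircle) := by
          rw [← integral_const_mul, ← integral_add hWx (hWc.const_mul ε), ← integral_const_mul]
          congr 1; ext y; ring
      _ = _ := by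
          rw [integral_sub_left_eq_self W _ x, hW0, integral_comp_sub_mul_re_fourier hW]
          ring
  simp_rw [hinner]
  rw [integral_add (integrable_of_continuous (by fun_prop))
      (integrable_of_continuous (by fun_prop)),
    integral_const_mul, integral_const_mul, integral_re_mul_fourier w hn,
    integral_re_fourier_mul_re_mul_fourier w hn]
  ring

theorem integral_mul_log_one_add_mul_re_fourier_le {n : ℤ} (hn : n ≠ 0) {ε : ℝ}
    (hε : |ε| ≤ 1 / 2) :
    ∫ x, (1 + ε * (fourier n x).re) * Real.log (1 + ε * (fourier n x).re)
        ∂(haarAddCircle (T := T)) ≤ ε ^ 2 / 4 + 4 * |ε| ^ 3 := by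
  have hc := integral_re_mul_fourier (T := T) 1 hn
  have hc2 := integral_re_fourier_mul_re_mul_fourier (T := T) 1 hn
  simp only [one_mul, one_re] at hc hc2
  have hpt : ∀ x : AddCircle T,
      (1 + ε * (fourier n x).re) * Real.log (1 + ε * (fourier n x).re) ≤
        ε * (fourier n x).re + ε ^ 2 / 2 * ((fourier n x).re * (fourier n x).re) + 4 * |ε| ^ 3 := by
    intro x
    have hx := abs_mul_re_fourier_le ε n x
    calc _ ≤ ε * (fourier n x).re + (ε * (fourier n x).re) ^ 2 / 2 +
          4 * |ε * (fourier n x).re| ^ 3 := Real.one_add_mul_log_one_add_le (hx.trans hε)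
      _ ≤ _ := by
        have hc3 := pow_le_one₀ (n := 3) (abs_nonneg _) (abs_re_fourier_le_one n x)
        rw [abs_mul, mul_pow]
        nlinarith [pow_nonneg (abs_nonneg ε) 3]
  refine (integral_mono (integrable_of_continuous ?_) (integrable_of_continuous (by fun_prop))
    hpt).trans_eq ?_
  · exact Real.continuous_mul_log.comp (by fun_prop)
  rw [integral_add (integrable_of_continuous (by fun_prop)) (integrable_const _),
    integral_add (integrable_of_continuous (by fun_prop))
      (integrable_of_continuous (by fun_prop)),
    integral_const_mul, integral_const_mul, hc, hc2]
  simp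
  ring

end AddCircle

theorem uniform_not_minimizer_supercritical_general
    (n : ℕ) (W : UnitAddCircle → ℝ) (hWcont : Continuous W)
    (hW0 : ∫ θ, W θ ∂circleMeasure = 0)
    (hWnorm : 2 * (fourierCoeff (fun θ => (W θ : ℂ)) ((n : ℤ) + 1)).re = 1)
    (K : ℝ) (hK : 1 < K) :
    ∃ q : UnitAddCircle → ℝ, Continuous q ∧ (∀ θ, 0 ≤ q θ) ∧
      (∫ θ, q θ ∂circleMeasure = 1) ∧ freeEnergy W K q < 0 := by
  have hm : (n : ℤ) + 1 ≠ 0 := by omega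
  set ε := min ((K - 1) / 32) (1 / 2)
  have hε : 0 < ε := lt_min (by linarith) one_half_pos
  have hε_abs : |ε| ≤ 1 / 2 := (abs_of_pos hε).trans_le (min_le_right _ _)
  have hεK : ε ≤ (K - 1) / 32 := min_le_left _ _
  refine ⟨fun θ ↦ 1 + ε * (fourier ((n : ℤ) + 1) θ).re, by fun_prop, fun θ ↦ ?_,
    AddCircle.integral_one_add_mul_re_fourier hm ε, ?_⟩
  · linarith [abs_le.mp ((AddCircle.abs_mul_re_fourier_le ε ((n : ℤ) + 1) θ).trans hε_abs)]
  have hentropy := AddCircle.integral_mul_log_one_add_mul_re_fourier_le (T := 1) hm hε_abs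
  have hinteraction := AddCircle.integral_interaction_one_add_mul_re_fourier
    (AddCircle.integrable_of_continuous hWcont) hW0 hm ε
  have hcoeff : (fourierCoeff (fun θ => (W θ : ℂ)) ((n : ℤ) + 1)).re = 1 / 2 := by linarith
  rw [abs_of_pos hε] at hentropy
  rw [freeEnergy, circleMeasure, hinteraction, hcoeff]
  nlinarith [mul_pos (pow_pos hε 2) (sub_pos.2 hK), mul_le_mul_of_nonneg_left hεK (sq_nonneg ε)]

/-- **Supercritical regime.** For a `1/(n+1)`-periodic even interaction with `Ŵ(0)=0`,
normalized by `2Ŵ(n+1)=1`, satisfying the decay condition `2Ŵ(k) ≤ (n+1)/k`, and every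
`K > 1`, there is a continuous probability density `q` with `F_K(q) < 0 = F_K(q_u)`:
the uniform density is not a global minimizer. -/
theorem uniform_not_minimizer_supercritical
    (n : ℕ) (W : UnitAddCircle → ℝ) (hWcont : Continuous W)
    (hWeven : ∀ θ, W (-θ) = W θ)
    (hW0 : ∫ θ, W θ ∂circleMeasure = 0)
    (hWper : ∀ θ, W (θ + ((1 / ((n : ℝ) + 1) : ℝ) : UnitAddCircle)) = W θ)
    (hWnorm : 2 * (fourierCoeff (fun θ => (W θ : ℂ)) ((n : ℤ) + 1)).re = 1)
    (hWdecay : ∀ k : ℕ, 1 ≤ k →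
      2 * (fourierCoeff (fun θ => (W θ : ℂ)) (k : ℤ)).re ≤ ((n : ℝ) + 1) / k)
    (K : ℝ) (hK : 1 < K) :
    ∃ q : UnitAddCircle → ℝ, Continuous q ∧ (∀ θ, 0 ≤ q θ) ∧
      (∫ θ, q θ ∂circleMeasure = 1) ∧ freeEnergy W K q < 0 :=
  uniform_not_minimizer_supercritical_general n W hWcont hW0 hWnorm K hK
end
end

section
/- For every real R > 0 and every integer ℓ ≥ 1, one has ℓR − sin(ℓR) ≤ ℓ³ (R − sin R). Equivalently, the Fourier coefficients Ŵ_R(ℓ) = (2/(πℓ³))(ℓR − sin(ℓR)) of the Hegselmann–Krause interaction satisfy Ŵ_R(ℓ) ≤ Ŵ_R(1) for all ℓ ≥ 1, so the linear stability threshold is K_#(R) = 1/(2Ŵ_R(1)) = π/(4(R − sin R)). -/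
/-!
The gap `g(t) = ℓ³(t − sin t) − (ℓt − sin(ℓt))` vanishes at `0` and has derivative
`ℓ³(1 − cos t) − ℓ(1 − cos(ℓt))`, which is nonnegative because
`1 − cos(ℓt) = 2 sin²(ℓt/2) ≤ 2ℓ² sin²(t/2) = ℓ²(1 − cos t)` by `|sin(ℓx)| ≤ ℓ|sin x|`.
Hence `g` is monotone and `g(R) ≥ g(0) = 0` for `R ≥ 0`.
-/

open Real

theorem abs_sin_nat_mul_le (n : ℕ) (x : ℝ) : |sin (n * x)| ≤ n * |sin x| := by
  induction n with
  | zero => simp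
  | succ n ih =>
    calc |sin ((n + 1 : ℕ) * x)| = |sin (n * x) * cos x + cos (n * x) * sin x| := by
          push_cast; rw [add_mul, one_mul, sin_add]
      _ ≤ |sin (n * x)| * |cos x| + |cos (n * x)| * |sin x| := by
          simpa only [abs_mul] using abs_add_le (sin (n * x) * cos x) (cos (n * x) * sin x)
      _ ≤ |sin (n * x)| * 1 + 1 * |sin x| := by
          gcongr
          exacts [abs_cos_le_one _, abs_cos_le_one _]
      _ ≤ (n + 1 : ℕ) * |sin x| := by push_cast; linarith

theorem sin_sq_nat_mul_le (n : ℕ) (x : ℝ) : sin (n * x) ^ 2 ≤ n ^ 2 * sin x ^ 2 := by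
  rw [← mul_pow, sq_le_sq, abs_mul, Nat.abs_cast]
  exact abs_sin_nat_mul_le n x

theorem one_sub_cos_nat_mul_le (n : ℕ) (x : ℝ) :
    1 - cos (n * x) ≤ n ^ 2 * (1 - cos x) := by
  have half_angle (y : ℝ) : 1 - cos y = 2 * sin (y / 2) ^ 2 := by
    rw [sin_sq_eq_half_sub, mul_div_cancel₀ y two_ne_zero]; ring
  have := sin_sq_nat_mul_le n (x / 2)
  rw [half_angle, half_angle, mul_div_assoc]
  linarith

/-- The gap in `Ŵ_R(ℓ) ≤ Ŵ_R(1)` after clearing the factor `2/(πℓ³)`. -/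
noncomputable def hkGap (n t : ℝ) : ℝ := n ^ 3 * (t - sin t) - (n * t - sin (n * t))

theorem hasDerivAt_hkGap (n t : ℝ) :
    HasDerivAt (hkGap n) (n ^ 3 * (1 - cos t) - n * (1 - cos (n * t))) t := by
  have h := (((hasDerivAt_id t).sub (hasDerivAt_sin t)).const_mul (n ^ 3)).sub
    (((hasDerivAt_id t).const_mul n).sub ((hasDerivAt_sin (n * t)).comp t
      ((hasDerivAt_id t).const_mul n)))
  exact h.congr_deriv (by ring)

theorem monotone_hkGap (n : ℕ) : Monotone (hkGap n) := by
  refine monotone_of_deriv_nonneg (fun t => (hasDerivAt_hkGap n t).differentiableAt)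
    fun t => ?_
  rw [(hasDerivAt_hkGap n t).deriv]
  have := mul_le_mul_of_nonneg_left (one_sub_cos_nat_mul_le n t) n.cast_nonneg
  linarith

theorem hkGap_zero (n : ℝ) : hkGap n 0 = 0 := by
  simp [hkGap]

theorem HK_coeff_le_first_general (R : ℝ) (hR : 0 < R) (ℓ : ℕ) :
    (ℓ : ℝ) * R - Real.sin (ℓ * R) ≤ (ℓ : ℝ) ^ 3 * (R - Real.sin R) := by
  have h := monotone_hkGap ℓ hR.le
  rw [hkGap_zero, hkGap, sub_nonneg] at h
  exact h

/-- **Monotonicity of the Hegselmann–Krause Fourier coefficients.** For every `R > 0`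
and every integer `ℓ ≥ 1`, `ℓR − sin(ℓR) ≤ ℓ³(R − sin R)`; equivalently, the Fourier
coefficients `Ŵ_R(ℓ) = (2/(πℓ³))(ℓR − sin(ℓR))` satisfy `Ŵ_R(ℓ) ≤ Ŵ_R(1)`, so the
linear stability threshold is `K_#(R) = π/(4(R − sin R))`. -/
theorem HK_coeff_le_first (R : ℝ) (hR : 0 < R) (ℓ : ℕ) (hℓ : 1 ≤ ℓ) :
    (ℓ : ℝ) * R - Real.sin (ℓ * R) ≤ (ℓ : ℝ) ^ 3 * (R - Real.sin R) :=
  HK_coeff_le_first_general R hR ℓ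
end

section
/- Let R ∈ (0, π] satisfy (sin R)(2 − cos R) ≤ R (equivalently R ≥ R_*, where R_* is the unique solution in (0,π) of R = (sin R)(2 − cos R)). Then for every integer ℓ ≥ 1, ℓR − sin(ℓR) ≤ ℓ² (R − sin R), and the inequality is strict for every ℓ ≥ 3. Equivalently, the Fourier coefficients of the Hegselmann–Krause interaction satisfy Ŵ_R(ℓ) ≤ Ŵ_R(1)/ℓ for all ℓ ≥ 1, strictly for ℓ ≥ 3. -/
/-!
For `ℓ = 1` the inequality is an equality, and for `ℓ = 2` it is equivalent to the hypothesis,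
since `sin 2R = 2 sin R cos R`. For `ℓ ≥ 3` the crude bounds `sin (ℓR) ≥ -1` and `sin R ≤ 1`
already suffice once `R > 5/3`, and the hypothesis forces `R > 5/3`: Taylor bounds on `sin` and
`cos` show `R < sin R (2 - cos R)` on `(0, 5/3]`.
-/

open Real

theorem cos_le_one_sub_sq_div_two_add_pow_four_div_twenty_four {x : ℝ} (hx : 0 ≤ x)
    (hx' : x ^ 2 ≤ 24) : cos x ≤ 1 - x ^ 2 / 2 + x ^ 4 / 24 := by
  have hsin : x / 2 - (x / 2) ^ 3 / 6 ≤ sin (x / 2) := sin_ge_sub_cube (by positivity)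
  have htaylor : 0 ≤ x / 2 - (x / 2) ^ 3 / 6 := by nlinarith
  have hcos : cos x = 1 - 2 * sin (x / 2) ^ 2 := by
    have h := cos_two_mul' (x / 2)
    rw [show 2 * (x / 2) = x by ring] at h
    linarith [sin_sq_add_cos_sq (x / 2)]
  rw [hcos]
  nlinarith [mul_le_mul hsin hsin htaylor (htaylor.trans hsin), pow_nonneg hx 6]

theorem lt_sin_mul_two_sub_cos {x : ℝ} (hx : 0 < x) (hx' : x ≤ 5 / 3) :
    x < sin x * (2 - cos x) := by
  have hsin : x - x ^ 3 / 6 < sin x := sin_gt_sub_cube hx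
  have hcos : cos x ≤ 1 - x ^ 2 / 2 + x ^ 4 / 24 :=
    cos_le_one_sub_sq_div_two_add_pow_four_div_twenty_four hx.le (by nlinarith)
  have hsin_pos : 0 < x - x ^ 3 / 6 := by nlinarith
  have hcos_pos : 0 < 1 + x ^ 2 / 2 - x ^ 4 / 24 := by nlinarith
  -- the product is `x + x³ (1/3 - x²/8 + x⁴/144)`, and the bracket decreases in `x²` up to `9`
  calc x < (x - x ^ 3 / 6) * (1 + x ^ 2 / 2 - x ^ 4 / 24) := by
        have hx2 : x ^ 2 ≤ 25 / 9 := by nlinarith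
        nlinarith [pow_pos hx 3, mul_nonneg (pow_pos hx 3).le
          (mul_nonneg (by linarith : (0 : ℝ) ≤ 25 / 9 - x ^ 2) (by linarith : (0 : ℝ) ≤ 137 / 9 - x ^ 2))]
    _ ≤ sin x * (2 - cos x) := by
        exact mul_le_mul hsin.le (by linarith) hcos_pos.le (hsin_pos.trans hsin).le

theorem five_thirds_lt_of_sin_mul_two_sub_cos_le {R : ℝ} (hR0 : 0 < R)
    (hR : sin R * (2 - cos R) ≤ R) : 5 / 3 < R := by
  by_contra! h
  exact (lt_sin_mul_two_sub_cos hR0 h).not_ge hR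

theorem two_mul_sub_sin_two_mul_le_iff (R : ℝ) :
    2 * R - sin (2 * R) ≤ 2 ^ 2 * (R - sin R) ↔ sin R * (2 - cos R) ≤ R := by
  rw [sin_two_mul]
  constructor <;> intro h <;> linarith

theorem mul_sub_sin_mul_lt_sq_mul_sub_sin {l R : ℝ} (hl : 3 ≤ l) (hR : 5 / 3 < R) :
    l * R - sin (l * R) < l ^ 2 * (R - sin R) := by
  have hsin_lR := neg_one_le_sin (l * R)
  have hsin_R := sin_le_one R
  -- lR + 1 < l²(R - 1) reduces to (2l + 1)(l - 3) ≥ 0 once R > 5/3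
  nlinarith [mul_pos (by nlinarith : (0 : ℝ) < l ^ 2 - l) (by linarith : (0 : ℝ) < R - 5 / 3),
    mul_nonneg (by linarith : (0 : ℝ) ≤ 2 * l + 1) (by linarith : (0 : ℝ) ≤ l - 3)]

theorem HK_coeff_decay_general (R : ℝ) (hR0 : 0 < R)
    (hR : Real.sin R * (2 - Real.cos R) ≤ R) :
    (∀ ℓ : ℕ, 1 ≤ ℓ → (ℓ : ℝ) * R - Real.sin (ℓ * R) ≤ (ℓ : ℝ) ^ 2 * (R - Real.sin R)) ∧
    (∀ ℓ : ℕ, 3 ≤ ℓ → (ℓ : ℝ) * R - Real.sin (ℓ * R) < (ℓ : ℝ) ^ 2 * (R - Real.sin R)) := by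
  have hR53 : 5 / 3 < R := five_thirds_lt_of_sin_mul_two_sub_cos_le hR0 hR
  have hstrict : ∀ ℓ : ℕ, 3 ≤ ℓ →
      (ℓ : ℝ) * R - Real.sin (ℓ * R) < (ℓ : ℝ) ^ 2 * (R - Real.sin R) := fun ℓ hℓ =>
    mul_sub_sin_mul_lt_sq_mul_sub_sin (by exact_mod_cast hℓ) hR53
  refine ⟨fun ℓ hℓ => ?_, hstrict⟩
  obtain rfl | rfl | hℓ3 : ℓ = 1 ∨ ℓ = 2 ∨ 3 ≤ ℓ := by omega
  · simp
  · exact_mod_cast (two_mul_sub_sin_two_mul_le_iff R).2 hR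
  · exact (hstrict ℓ hℓ3).le

/-- **Decay of the Hegselmann–Krause Fourier coefficients for `R ≥ R_*`.** If
`R ∈ (0, π]` satisfies `(sin R)(2 − cos R) ≤ R`, then `ℓR − sin(ℓR) ≤ ℓ²(R − sin R)`
for every integer `ℓ ≥ 1`, strictly for every `ℓ ≥ 3`; equivalently,
`Ŵ_R(ℓ) ≤ Ŵ_R(1)/ℓ` for all `ℓ ≥ 1`, strictly for `ℓ ≥ 3`. -/
theorem HK_coeff_decay (R : ℝ) (hR0 : 0 < R) (hRπ : R ≤ π)
    (hR : Real.sin R * (2 - Real.cos R) ≤ R) :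
    (∀ ℓ : ℕ, 1 ≤ ℓ → (ℓ : ℝ) * R - Real.sin (ℓ * R) ≤ (ℓ : ℝ) ^ 2 * (R - Real.sin R)) ∧
    (∀ ℓ : ℕ, 3 ≤ ℓ → (ℓ : ℝ) * R - Real.sin (ℓ * R) < (ℓ : ℝ) ^ 2 * (R - Real.sin R)) :=
  HK_coeff_decay_general R hR0 hR
end

section
/- There exists a unique R ∈ (0, π) such that R = (sin R)(2 − cos R). (This value R_* ≈ 2.139 is the threshold between discontinuous and continuous phase transitions for the noisy Hegselmann–Krause model; the function φ(R) = R − (sin R)(2 − cos R) satisfies φ(0) = 0, is strictly decreasing on (0, π/2), strictly increasing on (π/2, π), and φ(π) > 0.) -/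
open Real
open scoped Real

/- φ(0) = 0 and φ'(R) = 2 cos R (cos R − 1), so φ decreases on [0, π/2] and increases on
[π/2, π]. Hence φ < 0 on (0, π/2], while φ(π/2) = π/2 − 2 < 0 < π = φ(π) gives exactly one zero
in (π/2, π). -/

noncomputable def hkPhi (R : ℝ) : ℝ := R - sin R * (2 - cos R)

lemma hkPhi_zero : hkPhi 0 = 0 := by simp [hkPhi]

lemma hkPhi_pi_div_two : hkPhi (π / 2) = π / 2 - 2 := by simp [hkPhi]

lemma hkPhi_pi : hkPhi π = π := by simp [hkPhi]

lemma continuous_hkPhi : Continuous hkPhi := by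
  unfold hkPhi; fun_prop

lemma hasDerivAt_hkPhi (x : ℝ) : HasDerivAt hkPhi (2 * cos x * (cos x - 1)) x := by
  have h := (hasDerivAt_id x).sub
    ((hasDerivAt_sin x).mul ((hasDerivAt_const x (2 : ℝ)).sub (hasDerivAt_cos x)))
  refine h.congr_deriv ?_
  simp only [Pi.sub_apply]
  nlinarith [sin_sq_add_cos_sq x]

lemma strictAntiOn_hkPhi : StrictAntiOn hkPhi (Set.Icc 0 (π / 2)) := by
  refine strictAntiOn_of_hasDerivWithinAt_neg (convex_Icc _ _) continuous_hkPhi.continuousOn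
    (fun x _ => (hasDerivAt_hkPhi x).hasDerivWithinAt) fun x hx => ?_
  rw [interior_Icc] at hx
  have hcos_pos : 0 < cos x := cos_pos_of_mem_Ioo ⟨by linarith [hx.1, pi_pos], hx.2⟩
  have hcos_lt_one : cos x < 1 := by
    simpa using cos_lt_cos_of_nonneg_of_le_pi le_rfl (by linarith [hx.2, pi_pos]) hx.1
  nlinarith

lemma strictMonoOn_hkPhi : StrictMonoOn hkPhi (Set.Icc (π / 2) π) := by
  refine strictMonoOn_of_hasDerivWithinAt_pos (convex_Icc _ _) continuous_hkPhi.continuousOn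
    (fun x _ => (hasDerivAt_hkPhi x).hasDerivWithinAt) fun x hx => ?_
  rw [interior_Icc] at hx
  have hcos_neg : cos x < 0 := cos_neg_of_pi_div_two_lt_of_lt hx.1 (by linarith [hx.2, pi_pos])
  nlinarith [cos_le_one x]

lemma hkPhi_neg_of_mem_Ioc {x : ℝ} (hx : x ∈ Set.Ioc 0 (π / 2)) : hkPhi x < 0 := by
  have h := strictAntiOn_hkPhi (Set.left_mem_Icc.mpr (by positivity)) (Set.Ioc_subset_Icc_self hx)
    hx.1
  rwa [hkPhi_zero] at h

lemma exists_hkPhi_eq_zero : ∃ R ∈ Set.Ioo (π / 2) π, hkPhi R = 0 :=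
  intermediate_value_Ioo (by linarith [pi_pos]) continuous_hkPhi.continuousOn
    ⟨by rw [hkPhi_pi_div_two]; linarith [pi_lt_d2], by rw [hkPhi_pi]; exact pi_pos⟩

/-- **Existence and uniqueness of the Hegselmann–Krause threshold `R_*`.** There is a
unique `R ∈ (0, π)` with `R = (sin R)(2 − cos R)` (numerically `R_* ≈ 2.139`). -/
theorem HK_threshold_exists_unique :
    ∃! R : ℝ, R ∈ Set.Ioo 0 π ∧ R = Real.sin R * (2 - Real.cos R) := by
  have hzero_iff (y : ℝ) : y = sin y * (2 - cos y) ↔ hkPhi y = 0 := by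
    rw [hkPhi, sub_eq_zero]
  obtain ⟨R, hR, hRzero⟩ := exists_hkPhi_eq_zero
  refine ⟨R, ⟨⟨by linarith [hR.1, pi_pos], hR.2⟩, (hzero_iff R).mpr hRzero⟩, ?_⟩
  rintro y ⟨hy, hyeq⟩
  rw [hzero_iff] at hyeq
  have hy_gt : π / 2 < y := by
    by_contra! hle
    exact (hkPhi_neg_of_mem_Ioc ⟨hy.1, hle⟩).ne hyeq
  exact strictMonoOn_hkPhi.injOn ⟨hy_gt.le, hy.2.le⟩ ⟨hR.1.le, hR.2.le⟩ (hyeq.trans hRzero.symm)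
end
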